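/- Define T : ℕ → (Fin p → ℕ) → Fin p → R by: T_1(δ_l, l) = w(l) for each l ∈ Fin p and T_1(κ, t) = 0 for all other arguments; and for h ≥ 1 and κ with κ(l) ≥ 1, T_{h+1}(κ, l) = Σ_{t : (κ−δ_l)(t) ≥ 1} T_h(κ − δ_l, t) · w(l) · r̃(t)(l) · ∏_{i ∈ Fin p} r(i)(l)^{(κ−δ_l−δ_t)(i)} (and T_{h+1}(κ, l) = 0 when κ(l) = 0). Then for every n ≥ 1, every κ : Fin p → ℕ with Σ_i κ(i) = n, and every t ∈ Fin p: T_n(κ, t) = Σ over all c : Fin n → Fin p with config(c) = κ and c(n−1) = t of W¹_n(c). -/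

import Mathlib

open Finset

/-- The cell configuration of a cell assignment. -/
def cellConfig {p n : ℕ} (c : Fin n → Fin p) : Fin p → ℕ :=
  fun i => (Finset.univ.filter (fun a => c a = i)).card

/-- The indicator vector `δ_l`. -/
def delta {p : ℕ} (l : Fin p) : Fin p → ℕ := fun i => if i = l then 1 else 0

/-- The predecessor weight `W¹` of a cell assignment. -/
def predW {R : Type*} [CommRing R] {p n : ℕ} (w : Fin p → R)
    (r : Fin p → Fin p → R) (rt : Fin p → Fin p → R) (c : Fin n → Fin p) : R :=
  (∏ a, w (c a)) *
    (∏ a : Fin n, ∏ b ∈ Finset.univ.filter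
        (fun b : Fin n => (a : ℕ) < (b : ℕ) ∧ (b : ℕ) ≠ (a : ℕ) + 1),
      r (c a) (c b)) *
    ∏ a : Fin n, ∏ b ∈ Finset.univ.filter (fun b : Fin n => (b : ℕ) = (a : ℕ) + 1),
      rt (c a) (c b)

/-- The dynamic-programming table for the immediate-predecessor relation:
`T 1 (δ_l) l = w l` (and `0` elsewhere), and
`T (h+1) κ l = ∑_{t : (κ-δ_l) t ≥ 1} T h (κ-δ_l) t * w l * r̃ t l * ∏ i, r i l ^ ((κ-δ_l-δ_t) i)`
when `κ l ≥ 1`, and `0` otherwise. -/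
def T1 {R : Type*} [CommRing R] {p : ℕ} (w : Fin p → R) (r : Fin p → Fin p → R)
    (rt : Fin p → Fin p → R) : ℕ → (Fin p → ℕ) → Fin p → R
  | 0, _, _ => 0
  | 1, κ, t => if κ = delta t then w t else 0
  | h + 2, κ, l =>
      if 1 ≤ κ l then
        ∑ t ∈ Finset.univ.filter (fun t : Fin p => 1 ≤ (κ - delta l) t),
          T1 w r rt (h + 1) (κ - delta l) t * w l * rt t l *
            ∏ i, r i l ^ ((κ - delta l - delta t) i)
      else 0

/- Removing the last cell `l` of an assignment `c` of length `h + 1` splits `W¹(c)` as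
`W¹(init c) · w(l) · r̃(t, l) · ∏ r(c a, l)`, where `t` is the previous last cell and `a` runs
over the cells at distance at least two from the end; grouping that product by cell value gives
`∏ i, r(i, l) ^ (κ - δ_l - δ_t)(i)` for `κ = config(c)`. Summing over the assignments with a
fixed last cell, the right-hand side thus satisfies the recursion defining `T`. -/

section CellConfig

variable {p n : ℕ}

theorem cellConfig_snoc (c : Fin n → Fin p) (l : Fin p) :
    cellConfig (Fin.snoc c l : Fin (n + 1) → Fin p) = cellConfig c + delta l := by
  funext i
  simp only [cellConfig, Pi.add_apply, card_filter, Fin.sum_univ_castSucc, Fin.snoc_castSucc,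
    Fin.snoc_last, delta, eq_comm (a := i)]

theorem cellConfig_init (c : Fin (n + 1) → Fin p) :
    cellConfig (Fin.init c) = cellConfig c - delta (c (Fin.last n)) := by
  conv_rhs => rw [← Fin.snoc_init_self c, cellConfig_snoc, Fin.snoc_last]
  exact (add_tsub_cancel_right _ _).symm

theorem one_le_cellConfig_apply (c : Fin n → Fin p) (a : Fin n) : 1 ≤ cellConfig c (c a) :=
  card_pos.mpr ⟨a, by simp⟩

theorem prod_comp_eq_prod_pow_cellConfig {M : Type*} [CommMonoid M] (f : Fin p → M)
    (c : Fin n → Fin p) : ∏ a, f (c a) = ∏ i, f i ^ cellConfig c i := by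
  rw [← prod_fiberwise' univ c f]
  exact prod_congr rfl fun i _ => prod_const _

theorem add_delta_eq_iff {κ x : Fin p → ℕ} {l : Fin p} (hl : 1 ≤ κ l) :
    x + delta l = κ ↔ x = κ - delta l := by
  constructor
  · rintro rfl
    exact (add_tsub_cancel_right _ _).symm
  · rintro rfl
    funext i
    by_cases hi : i = l
    · subst hi
      simp only [delta, Pi.add_apply, Pi.sub_apply, if_true]
      omega
    · simp [delta, hi]

end CellConfig

theorem sum_filter_last_eq_sum_snoc {α M : Type*} [Fintype α] [DecidableEq α] [AddCommMonoid M]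
    {n : ℕ} (P : (Fin (n + 1) → α) → Prop) [DecidablePred P] (l : α)
    (f : (Fin (n + 1) → α) → M) :
    ∑ c ∈ univ.filter (fun c => P c ∧ c (Fin.last n) = l), f c =
      ∑ c ∈ univ.filter (fun c : Fin n → α => P (Fin.snoc c l : Fin (n + 1) → α)),
        f (Fin.snoc c l : Fin (n + 1) → α) := by
  refine (sum_nbij' (fun c : Fin n → α => (Fin.snoc c l : Fin (n + 1) → α)) Fin.init
    ?_ ?_ ?_ ?_ fun _ _ => rfl).symm
  · intro c hc
    simpa using hc
  · intro c hc
    obtain ⟨hP, rfl⟩ := (mem_filter.mp hc).2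
    simpa [Fin.snoc_init_self] using hP
  · intro c _
    exact Fin.init_snoc _ _
  · intro c hc
    obtain ⟨-, rfl⟩ := (mem_filter.mp hc).2
    exact Fin.snoc_init_self c

theorem prod_prod_filter_castSucc {M : Type*} [CommMonoid M] {n : ℕ} (P : ℕ → ℕ → Prop)
    [DecidableRel P] (hP : ∀ a b, P a b → a < b) (f : Fin (n + 1) → Fin (n + 1) → M) :
    ∏ a : Fin (n + 1), ∏ b ∈ univ.filter (fun b : Fin (n + 1) => P a b), f a b =
      (∏ a : Fin n, ∏ b ∈ univ.filter (fun b : Fin n => P a b), f a.castSucc b.castSucc) *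
        ∏ a ∈ univ.filter (fun a : Fin n => P a n), f a.castSucc (Fin.last n) := by
  have hlast : ∀ b ≤ n, ¬ P n b := fun b hb h => (hP _ _ h).not_ge hb
  simp only [prod_filter, Fin.prod_univ_castSucc (n := n), Fin.val_castSucc, Fin.val_last,
    prod_mul_distrib, if_neg (hlast _ le_rfl)]
  rw [prod_eq_one fun b _ => if_neg (hlast _ b.is_lt.le), mul_one, mul_one]

section PredW

variable {R : Type*} [CommRing R] {p : ℕ} (w : Fin p → R) (r rt : Fin p → Fin p → R)

theorem predW_snoc {n : ℕ} (c : Fin (n + 1) → Fin p) (l : Fin p) :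
    predW w r rt (Fin.snoc c l : Fin (n + 2) → Fin p) =
      predW w r rt c * w l * rt (c (Fin.last n)) l *
        ∏ i, r i l ^ cellConfig (Fin.init c) i := by
  have hne : ∀ a : Fin n, n ≠ a := fun a => a.is_lt.ne'
  have hr : ∏ a ∈ univ.filter (fun a : Fin (n + 1) => (a : ℕ) < n + 1 ∧ n + 1 ≠ a + 1),
      r (c a) l = ∏ a, r (Fin.init c a) l := by
    simp [prod_filter, Fin.prod_univ_castSucc, Fin.init, hne]
  have hrt : ∏ a ∈ univ.filter (fun a : Fin (n + 1) => n + 1 = (a : ℕ) + 1),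
      rt (c a) l = rt (c (Fin.last n)) l := by
    simp [prod_filter, Fin.prod_univ_castSucc, hne]
  unfold predW
  rw [prod_prod_filter_castSucc (fun a b => a < b ∧ b ≠ a + 1) (fun _ _ h => h.1),
    prod_prod_filter_castSucc (fun a b => b = a + 1) (by omega), Fin.prod_univ_castSucc,
    ← prod_comp_eq_prod_pow_cellConfig]
  simp only [Fin.snoc_castSucc, Fin.snoc_last, hr, hrt]
  ring

theorem T1_succ_eq_sum_predW (m : ℕ) (κ : Fin p → ℕ) (l : Fin p) :
    T1 w r rt (m + 1) κ l =
      ∑ c ∈ univ.filter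
          (fun c : Fin (m + 1) → Fin p => cellConfig c = κ ∧ c (Fin.last m) = l),
        predW w r rt c := by
  induction m generalizing κ l with
  | zero =>
    rw [sum_filter_last_eq_sum_snoc]
    simp only [cellConfig_snoc]
    have hc : cellConfig (default : Fin 0 → Fin p) = 0 := funext fun _ => rfl
    rw [T1, univ_unique, filter_singleton, hc, zero_add]
    split_ifs <;> simp_all [predW, Fin.snoc]
  | succ m ih =>
    rw [sum_filter_last_eq_sum_snoc]
    simp only [cellConfig_snoc]
    by_cases hl : 1 ≤ κ l
    · simp only [add_delta_eq_iff hl]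
      rw [T1, if_pos hl, ← sum_fiberwise_of_maps_to
        (g := fun c : Fin (m + 1) → Fin p => c (Fin.last m))
        (t := univ.filter fun t => 1 ≤ (κ - delta l) t) fun c hc =>
          mem_filter.mpr ⟨mem_univ _, by
            rw [← (mem_filter.mp hc).2]; exact one_le_cellConfig_apply c _⟩]
      refine sum_congr rfl fun t _ => ?_
      rw [ih, sum_mul, sum_mul, sum_mul, filter_filter]
      refine sum_congr rfl fun c hc => ?_
      obtain ⟨hκ, ht⟩ := (mem_filter.mp hc).2
      rw [predW_snoc, cellConfig_init, hκ, ht]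
    · rw [T1, if_neg hl]
      refine (sum_eq_zero fun c hc => absurd ?_ hl).symm
      rw [← (mem_filter.mp hc).2]
      simp [delta]

end PredW

theorem stmt8 {R : Type*} [CommRing R] {p : ℕ}
    (w : Fin p → R) (r : Fin p → Fin p → R) (rt : Fin p → Fin p → R)
    (n : ℕ) (hn : 1 ≤ n) (κ : Fin p → ℕ) (t : Fin p) :
    T1 w r rt n κ t =
      ∑ c ∈ Finset.univ.filter
          (fun c : Fin n → Fin p => cellConfig c = κ ∧ c ⟨n - 1, by omega⟩ = t),
        predW w r rt c := by
  obtain ⟨m, rfl⟩ : ∃ m, n = m + 1 := ⟨n - 1, by omega⟩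
  exact T1_succ_eq_sum_predW w r rt m κ t
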